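/- arXiv:1211.0714 — 3 statements merged into one kernel-verified Lean document; each statement's English description precedes it below -/
import Mathlib

section
/- Let γ > 0 and let f : ℂ → ℂ be an entire function of exponential type satisfying |f(λ)| ≤ exp(A + γ(|Im λ| − Im λ)) for all λ ∈ ℂ, for some constant A ≥ 0, and |f(x)| ≥ 1 for all x ∈ ℝ. Then for every r > 0, the number N(r,f) of zeros of f of modulus at most r, counted with multiplicity, satisfies N(r,f) ≤ (1/log 2)·(4rγ/π + A). -/
open MeasureTheory Complex Real

/-- The order of vanishing of `f` at `z` (as a natural number); `0` if `f` is not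
analytic at `z` or vanishes to infinite order. -/
noncomputable def ordAt (f : ℂ → ℂ) (z : ℂ) : ℕ :=
  open Classical in
  if h : AnalyticAt ℂ f z then (analyticOrderAt f z).toNat else 0

/-- `N(r,f)`: the number of zeros of `f` of modulus at most `r`,
counted with multiplicity (as an extended nonnegative real). -/
noncomputable def zeroCount (f : ℂ → ℂ) (r : ℝ) : ENNReal :=
  ∑' z : ℂ, if ‖z‖ ≤ r ∧ f z = 0 then (ordAt f z : ENNReal) else 0

/-!
Apply Jensen's formula on the circle of radius `2r`: each zero of modulus at most `r`
contributes at least `log 2` to its sum, so, as `‖f 0‖ ≥ 1`,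
`N(r, f) log 2 ≤ circleAverage (log ‖f ·‖) 0 (2r) - log ‖f 0‖ ≤ circleAverage (log ‖f ·‖) 0 (2r)`.
On the circle `log ‖f‖ ≤ A + γ (|Im z| - Im z)`, and the average of the
right-hand side is `A + 4 r γ / π`, since `Im` averages to zero and `|sin|` to `2 / π`.
-/

open Metric MeromorphicOn

theorem integral_abs_sin_zero_two_pi : ∫ θ in (0 : ℝ)..2 * π, |Real.sin θ| = 4 := by
  have hcont : Continuous fun θ : ℝ => |Real.sin θ| := by fun_prop
  have hper : Function.Periodic (fun θ => |Real.sin θ|) π := fun θ => by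
    simp [Real.sin_add_pi]
  have hhalf : ∫ θ in (0 : ℝ)..π, |Real.sin θ| = 2 := by
    rw [intervalIntegral.integral_congr (g := Real.sin), integral_sin]
    · norm_num
    · intro θ hθ
      rw [Set.uIcc_of_le pi_pos.le] at hθ
      exact abs_of_nonneg (sin_nonneg_of_nonneg_of_le_pi hθ.1 hθ.2)
  rw [two_mul, ← intervalIntegral.integral_add_adjacent_intervals (b := π)
    (hcont.intervalIntegrable _ _) (hcont.intervalIntegrable _ _),
    hper.intervalIntegral_add_eq π 0, zero_add, hhalf]
  norm_num

theorem circleAverage_abs_im_sub_im (R : ℝ) :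
    circleAverage (fun z : ℂ => |z.im| - z.im) 0 R = 2 * |R| / π := by
  have hsin : Continuous fun θ : ℝ => |Real.sin θ| := by fun_prop
  simp only [circleAverage_def, smul_eq_mul, circleMap_zero, mul_im, ofReal_re, ofReal_im,
    exp_ofReal_mul_I_re, exp_ofReal_mul_I_im, zero_mul, add_zero, abs_mul]
  rw [intervalIntegral.integral_sub ((hsin.intervalIntegrable _ _).const_mul _)
      (Real.continuous_sin.intervalIntegrable _ _ |>.const_mul _),
    intervalIntegral.integral_const_mul, intervalIntegral.integral_const_mul,
    integral_abs_sin_zero_two_pi, integral_sin, Real.cos_zero, Real.cos_two_pi, sub_self,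
    mul_zero, sub_zero]
  field_simp
  ring

theorem circleAverage_log_norm_le_of_norm_le_exp {f : ℂ → ℂ} {A γ R : ℝ} (hA : 0 ≤ A)
    (hγ : 0 ≤ γ) (hf : CircleIntegrable (Real.log ‖f ·‖) 0 R)
    (hbound : ∀ z : ℂ, ‖f z‖ ≤ Real.exp (A + γ * (|z.im| - z.im))) :
    circleAverage (Real.log ‖f ·‖) 0 R ≤ A + γ * (2 * |R| / π) := by
  have hle : ∀ z : ℂ, Real.log ‖f z‖ ≤ A + γ * (|z.im| - z.im) := by
    intro z
    rcases eq_or_ne (f z) 0 with hz | hz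
    · rw [hz, norm_zero, Real.log_zero]
      exact add_nonneg hA (mul_nonneg hγ (sub_nonneg.mpr (le_abs_self _)))
    · exact (Real.log_le_iff_le_exp (norm_pos_iff.mpr hz)).mpr (hbound z)
  have hint {g : ℂ → ℝ} (hg : Continuous g) : CircleIntegrable g 0 R :=
    hg.continuousOn.circleIntegrable'
  calc circleAverage (Real.log ‖f ·‖) 0 R
      ≤ circleAverage (fun z : ℂ => A + γ • (|z.im| - z.im)) 0 R :=
        circleAverage_mono hf (hint (by fun_prop)) fun z _ => hle z
    _ = A + γ * (2 * |R| / π) := by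
        rw [circleAverage_fun_add (hint continuous_const) (hint (by fun_prop)),
          circleAverage_const, circleAverage_fun_smul, circleAverage_abs_im_sub_im, smul_eq_mul]

theorem AnalyticOnNhd.divisor_mul_log_le {c u : ℂ} {r R : ℝ} {f : ℂ → ℂ} (hr : 0 < r)
    (hrR : r < R) (hf : AnalyticOnNhd ℂ f (closedBall c R)) (hfc : f c ≠ 0) :
    divisor f (closedBall c r) u * Real.log (R / r) ≤
      divisor f (closedBall c R) u * Real.log (R * ‖c - u‖⁻¹) := by
  have hsub : closedBall c r ⊆ closedBall c R := closedBall_subset_closedBall hrR.le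
  have hd : (0 : ℝ) ≤ divisor f (closedBall c R) u := by exact_mod_cast hf.divisor_nonneg u
  rw [← divisor_restrict hf.meromorphicOn hsub, Function.locallyFinsuppWithin.restrict_apply]
  split_ifs with hur
  · rcases eq_or_ne u c with rfl | huc
    · simp [hf.divisor_apply (hsub hur), (hf u (hsub hur)).analyticOrderAt_eq_zero.mpr hfc]
    · have hpos : 0 < ‖c - u‖ := norm_pos_iff.mpr (sub_ne_zero.mpr huc.symm)
      refine mul_le_mul_of_nonneg_left ?_ hd
      rw [← div_eq_mul_inv]
      refine log_le_log (div_pos (hr.trans hrR) hr)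
        (div_le_div_of_nonneg_left (hr.trans hrR).le hpos ?_)
      simpa [dist_eq_norm'] using hur
  · rw [Int.cast_zero, zero_mul]
    by_cases huR : u ∈ closedBall c R
    · refine mul_nonneg hd (log_nonneg ?_)
      simp only [mem_closedBall, dist_eq_norm', not_le] at hur huR
      rw [← div_eq_mul_inv, one_le_div (hr.trans hur)]
      exact huR
    · simp [huR]

theorem AnalyticOnNhd.finsum_divisor_mul_log_le {c : ℂ} {r R : ℝ} {f : ℂ → ℂ} (hr : 0 < r)
    (hrR : r < R) (hf : AnalyticOnNhd ℂ f (closedBall c R)) (hfc : f c ≠ 0) :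
    (∑ᶠ u, (divisor f (closedBall c r) u : ℝ)) * Real.log (R / r) ≤
      circleAverage (Real.log ‖f ·‖) c R - Real.log ‖f c‖ := by
  have hR : 0 < R := hr.trans hrR
  have hf' : AnalyticOnNhd ℂ f (closedBall c |R|) := by rwa [abs_of_pos hR]
  rw [hf'.circleAverage_log_norm hR.ne' hfc, abs_of_pos hR, add_sub_cancel_right, finsum_mul]
  refine finsum_le_finsum' ?_ ?_ fun u => hf.divisor_mul_log_le hr hrR hfc
  · exact (divisor f _).finiteSupport (isCompact_closedBall c r) |>.subset
      fun _ _ => by simp_all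
  · exact (divisor f _).finiteSupport (isCompact_closedBall c R) |>.subset
      fun _ _ => by simp_all

theorem ordAt_eq_zero_of_ne_zero {f : ℂ → ℂ} {z : ℂ} (hfz : f z ≠ 0) : ordAt f z = 0 := by
  unfold ordAt
  split_ifs <;> simp [analyticOrderAt_eq_zero.mpr (Or.inr hfz)]

theorem AnalyticOnNhd.ordAt_eq_divisor {f : ℂ → ℂ} {U : Set ℂ} {z : ℂ}
    (hf : AnalyticOnNhd ℂ f U) (hz : z ∈ U) : (ordAt f z : ℤ) = divisor f U z := by
  rw [hf.divisor_apply hz, ordAt, dif_pos (hf z hz)]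
  cases analyticOrderAt f z <;> simp

theorem AnalyticOnNhd.zeroCount_eq_ofReal_finsum_divisor {f : ℂ → ℂ} {r : ℝ}
    (hf : AnalyticOnNhd ℂ f (closedBall 0 r)) :
    zeroCount f r = ENNReal.ofReal (∑ᶠ u, (divisor f (closedBall 0 r) u : ℝ)) := by
  have hfin : (Function.support fun u => (divisor f (closedBall 0 r) u : ℝ)).Finite :=
    (divisor f _).finiteSupport (isCompact_closedBall 0 r) |>.subset fun _ _ => by simp_all
  rw [← tsum_eq_finsum (L := .unconditional ℂ) hfin, ENNReal.ofReal_tsum_of_nonneg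
    (fun u => by exact_mod_cast hf.divisor_nonneg u) (summable_of_hasFiniteSupport hfin)]
  refine tsum_congr fun z => ?_
  by_cases hz : z ∈ closedBall 0 r
  · rw [← hf.ordAt_eq_divisor hz, Int.cast_natCast, ENNReal.ofReal_natCast]
    rw [mem_closedBall, dist_zero_right] at hz
    by_cases hfz : f z = 0
    · simp [hz, hfz]
    · simp [hfz, ordAt_eq_zero_of_ne_zero hfz]
  · rw [Function.locallyFinsuppWithin.apply_eq_zero_of_notMem _ hz]
    rw [mem_closedBall, dist_zero_right] at hz
    simp [hz]

/-- Global bound on the zero-counting function of an entire function in the class `E_γ`. -/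
theorem zeroCount_bound (γ A : ℝ) (hγ : 0 < γ) (hA : 0 ≤ A)
    (f : ℂ → ℂ) (hf : Differentiable ℂ f)
    (hbound : ∀ z : ℂ, ‖f z‖ ≤ Real.exp (A + γ * (|z.im| - z.im)))
    (hreal : ∀ x : ℝ, 1 ≤ ‖f x‖)
    (r : ℝ) (hr : 0 < r) :
    zeroCount f r ≤ ENNReal.ofReal ((1 / Real.log 2) * (4 * r * γ / π + A)) := by
  have hfa : ∀ s : Set ℂ, AnalyticOnNhd ℂ f s := fun _ z _ => hf.analyticAt z
  have hf0 : 1 ≤ ‖f 0‖ := by simpa using hreal 0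
  have hjensen := (hfa _).finsum_divisor_mul_log_le hr (by linarith : r < 2 * r)
    (norm_pos_iff.mp (one_pos.trans_le hf0))
  have havg := circleAverage_log_norm_le_of_norm_le_exp hA hγ.le
    ((hfa _).meromorphicOn.circleIntegrable_log_norm (R := 2 * r)) hbound
  rw [mul_div_cancel_right₀ 2 hr.ne'] at hjensen
  rw [abs_of_pos (by positivity), show γ * (2 * (2 * r) / π) = 4 * r * γ / π by ring] at havg
  rw [(hfa _).zeroCount_eq_ofReal_finsum_divisor, one_div_mul_eq_div]
  refine ENNReal.ofReal_le_ofReal ?_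
  rw [le_div_iff₀ (log_pos one_lt_two)]
  linarith [Real.log_nonneg hf0]
end

section
/- Let γ > 0 and let q ∈ L¹(ℝ;ℂ) with supp q ⊆ [0,γ]. Then the series a(λ) = 1 + Σ_{n≥1} a_n(λ) converges uniformly on bounded subsets of ℂ and defines an entire function a : ℂ → ℂ. -/
/-!
Each `a_n(λ)` is the integral over the ordered simplex of `w(t) e^{2iλ φ(t)}`, where
`|w(t)| = ∏ |q(t_i)|` and the phase `φ(t) = Σ_j (t_{2j+1} - t_{2j})` lies in `[0, nγ]`.
The coordinate permutations cut `ℝ^{2n}` into `(2n)!` congruent copies of the ordered cone, so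
`|a_n(λ)| ≤ e^{2|λ||γ|n} ‖q‖₁^{2n} / (2n)!`. The Weierstrass M-test then gives uniform convergence
on bounded sets, each `a_n` is entire by differentiation under the integral sign, and a locally
uniform limit of entire functions is entire.
-/

open MeasureTheory Complex Real Filter

/-- The `n`-th simplex integral `a_n(λ)` in the iteration series for the inverse
transmission coefficient of the 1D massless Dirac operator with potential `q`. -/
noncomputable def aCoeff (γ : ℝ) (q : ℝ → ℂ) (n : ℕ) (l : ℂ) : ℂ :=
  ∫ t : Fin (2 * n) → ℝ in {t | StrictMono t ∧ ∀ i, t i ∈ Set.Ioo 0 γ},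
    ∏ j : Fin n,
      q (t ⟨2 * (j : ℕ), by have := j.isLt; omega⟩) *
        (starRingEnd ℂ) (q (t ⟨2 * (j : ℕ) + 1, by have := j.isLt; omega⟩)) *
        Complex.exp (2 * Complex.I * l *
          (((t ⟨2 * (j : ℕ) + 1, by have := j.isLt; omega⟩) : ℝ)
            - (t ⟨2 * (j : ℕ), by have := j.isLt; omega⟩)))

/-- The function `a(λ) = 1 + Σ_{n≥1} a_n(λ)`. -/
noncomputable def diracA (γ : ℝ) (q : ℝ → ℂ) (l : ℂ) : ℂ :=
  1 + ∑' n : ℕ, aCoeff γ q (n + 1) l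

open scoped Nat ComplexConjugate

section StrictMonoSimplex

variable {m : ℕ}

theorem measurableSet_setOf_strictMono : MeasurableSet {t : Fin m → ℝ | StrictMono t} := by
  have : {t : Fin m → ℝ | StrictMono t} = ⋂ (i) (j) (_ : i < j), {t | t i < t j} := by
    ext t; simp [StrictMono]
  rw [this]
  exact .iInter fun i => .iInter fun j => .iInter fun _ =>
    measurableSet_lt (measurable_pi_apply i) (measurable_pi_apply j)

theorem eq_of_strictMono_comp_perm {t : Fin m → ℝ} {σ τ : Equiv.Perm (Fin m)}
    (hσ : StrictMono (t ∘ σ)) (hτ : StrictMono (t ∘ τ)) : σ = τ := by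
  have hrange : Set.range (t ∘ σ) = Set.range (t ∘ τ) := by
    rw [Set.range_comp, Set.range_comp, σ.range_eq_univ, τ.range_eq_univ]
  have hcomp : t ∘ σ = t ∘ τ := (hσ.range_inj hτ).mp hrange
  have ht : Function.Injective t := by
    simpa [Function.comp_assoc] using hσ.injective.comp σ.symm.injective
  exact Equiv.ext fun i => ht (congrFun hcomp i)

theorem setIntegral_strictMono_comp_perm {E : Type*} [NormedAddCommGroup E] [NormedSpace ℝ E]
    {G : (Fin m → ℝ) → E} (hG : ∀ (σ : Equiv.Perm (Fin m)) t, G (t ∘ σ) = G t)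
    (σ : Equiv.Perm (Fin m)) :
    ∫ t in {t | StrictMono (t ∘ σ)}, G t = ∫ t in {t : Fin m → ℝ | StrictMono t}, G t := by
  let e := MeasurableEquiv.arrowCongr' σ.symm (MeasurableEquiv.refl ℝ)
  have he : ∀ t, e t = t ∘ σ := fun t => rfl
  have hmp : MeasurePreserving e :=
    volume_preserving_arrowCongr' _ _ (MeasurePreserving.id volume)
  rw [← hmp.setIntegral_preimage_emb e.measurableEmbedding G {t | StrictMono t}]
  simp only [Set.preimage_ofPred_eq, he, hG]

theorem setIntegral_strictMono_prod_le {g : ℝ → ℝ} (hg : Integrable g) (hg0 : 0 ≤ g) :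
    ∫ t in {t : Fin m → ℝ | StrictMono t}, ∏ i, g (t i) ≤ (∫ x, g x) ^ m / m ! := by
  classical
  set G : (Fin m → ℝ) → ℝ := fun t => ∏ i, g (t i)
  set S : Equiv.Perm (Fin m) → Set (Fin m → ℝ) := fun σ => {t | StrictMono (t ∘ σ)}
  have hGint : Integrable G := Integrable.fintype_prod fun _ => hg
  have hS : ∀ σ, MeasurableSet (S σ) := fun σ =>
    measurableSet_setOf_strictMono.preimage (by fun_prop)
  have hdisj : Pairwise (Function.onFun Disjoint S) := fun σ τ hne =>
    Set.disjoint_left.2 fun _ hσ hτ => hne (eq_of_strictMono_comp_perm hσ hτ)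
  have hperm : ∀ σ, ∫ t in S σ, G t = ∫ t in {t : Fin m → ℝ | StrictMono t}, G t :=
    setIntegral_strictMono_comp_perm fun σ t => Equiv.prod_comp σ fun i => g (t i)
  have hsum : ∑ σ : Equiv.Perm (Fin m), ∫ t in S σ, G t ≤ ∫ t, G t := by
    rw [← integral_biUnion_finset _ (fun σ _ => hS σ) (hdisj.set_pairwise _)
      fun σ _ => hGint.integrableOn]
    exact setIntegral_le_integral hGint (.of_forall fun t => Finset.prod_nonneg fun i _ => hg0 _)
  rw [Finset.sum_congr rfl fun σ _ => hperm σ, Finset.sum_const, Finset.card_univ,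
    Fintype.card_perm, Fintype.card_fin, nsmul_eq_mul, integral_fintype_prod_volume_eq_pow,
    Fintype.card_fin] at hsum
  rw [le_div_iff₀ (by positivity), mul_comm]
  exact hsum

theorem measurableSet_simplex (γ : ℝ) :
    MeasurableSet {t : Fin m → ℝ | StrictMono t ∧ ∀ i, t i ∈ Set.Ioo 0 γ} := by
  have hbox : {t : Fin m → ℝ | ∀ i, t i ∈ Set.Ioo 0 γ} = Set.univ.pi fun _ => Set.Ioo 0 γ := by
    ext; simp
  rw [Set.ofPred_and, hbox]
  exact measurableSet_setOf_strictMono.inter (.univ_pi fun _ => measurableSet_Ioo)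

end StrictMonoSimplex

section ExpIntegral

variable {α : Type*} [MeasurableSpace α] {μ : Measure α} {H : α → ℂ} {D : α → ℝ} {B : ℝ}

theorem norm_cexp_mul_le (c l : ℂ) {d : ℝ} (hd : |d| ≤ B) :
    ‖cexp (c * l * d)‖ ≤ Real.exp (‖c‖ * ‖l‖ * B) := by
  rw [Complex.norm_exp]
  gcongr
  calc (c * l * d).re ≤ ‖c * l * d‖ := re_le_norm _
    _ = ‖c‖ * ‖l‖ * |d| := by simp
    _ ≤ ‖c‖ * ‖l‖ * B := by gcongr

theorem norm_integral_mul_cexp_le (hH : Integrable H μ) (hD : ∀ᵐ t ∂μ, |D t| ≤ B) (c l : ℂ) :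
    ‖∫ t, H t * cexp (c * l * D t) ∂μ‖ ≤ Real.exp (‖c‖ * ‖l‖ * B) * ∫ t, ‖H t‖ ∂μ := by
  rw [← integral_const_mul]
  refine norm_integral_le_of_norm_le (hH.norm.const_mul _) ?_
  filter_upwards [hD] with t ht
  rw [norm_mul, mul_comm]
  exact mul_le_mul_of_nonneg_right (norm_cexp_mul_le c l ht) (norm_nonneg _)

theorem differentiable_integral_mul_cexp (hH : Integrable H μ) (hDm : AEMeasurable D μ)
    (hD : ∀ᵐ t ∂μ, |D t| ≤ B) (c : ℂ) :
    Differentiable ℂ fun l => ∫ t, H t * cexp (c * l * D t) ∂μ := by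
  intro l₀
  have hmeas : ∀ l : ℂ, AEStronglyMeasurable (fun t => H t * cexp (c * l * D t)) μ := fun l =>
    hH.1.mul (by fun_prop : AEMeasurable (fun t => cexp (c * l * D t)) μ).aestronglyMeasurable
  have hderiv : ∀ t l, HasDerivAt (fun l => H t * cexp (c * l * D t))
      (c * D t * (H t * cexp (c * l * D t))) l := by
    intro t l
    have := (((hasDerivAt_id l).const_mul c).mul_const (D t : ℂ)).cexp.const_mul (H t)
    simp only [id, mul_one] at this
    exact this.congr_deriv (by ring)
  have hbound : ∀ᵐ t ∂μ, ∀ l ∈ Metric.ball l₀ 1, ‖c * D t * (H t * cexp (c * l * D t))‖ ≤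
      ‖c‖ * B * Real.exp (‖c‖ * (‖l₀‖ + 1) * B) * ‖H t‖ := by
    filter_upwards [hD] with t ht l hl
    have hl' : ‖l‖ ≤ ‖l₀‖ + 1 := by
      have := norm_le_norm_add_norm_sub' l l₀
      rw [Metric.mem_ball, dist_eq_norm] at hl
      linarith
    have hcD : ‖c * D t‖ ≤ ‖c‖ * B := by
      rw [norm_mul, Complex.norm_real, Real.norm_eq_abs]
      gcongr
    have hexp : ‖cexp (c * l * D t)‖ ≤ Real.exp (‖c‖ * (‖l₀‖ + 1) * B) :=
      (norm_cexp_mul_le c l ht).trans (by gcongr; exact (abs_nonneg _).trans ht)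
    calc ‖c * D t * (H t * cexp (c * l * D t))‖ = ‖c * D t‖ * ‖cexp (c * l * D t)‖ * ‖H t‖ := by
          rw [norm_mul (c * _), norm_mul (H t)]; ring
      _ ≤ ‖c‖ * B * Real.exp (‖c‖ * (‖l₀‖ + 1) * B) * ‖H t‖ := by
          refine mul_le_mul_of_nonneg_right ?_ (norm_nonneg _)
          exact mul_le_mul hcD hexp (norm_nonneg _) ((norm_nonneg _).trans hcD)
  have hF₀ : Integrable (fun t => H t * cexp (c * l₀ * D t)) μ :=
    (hH.norm.const_mul (Real.exp (‖c‖ * ‖l₀‖ * B))).mono' (hmeas l₀) <| by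
      filter_upwards [hD] with t ht
      rw [norm_mul, mul_comm]
      exact mul_le_mul_of_nonneg_right (norm_cexp_mul_le c l₀ ht) (norm_nonneg _)
  exact (hasDerivAt_integral_of_dominated_loc_of_deriv_le (Metric.ball_mem_nhds l₀ one_pos)
    (.of_forall hmeas) hF₀
    ((by fun_prop : AEMeasurable (fun t => (c * D t : ℂ)) μ).aestronglyMeasurable.mul (hmeas l₀))
    hbound (hH.norm.const_mul _) (.of_forall fun t l _ => hderiv t l)).2.differentiableAt

end ExpIntegral

theorem Fin.prod_univ_two_mul {M : Type*} [CommMonoid M] {n : ℕ} (f : Fin (2 * n) → M) :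
    ∏ i, f i = ∏ j : Fin n, f ⟨2 * j, by omega⟩ * f ⟨2 * j + 1, by omega⟩ := by
  rw [← (finProdFinEquiv.trans (finCongr (Nat.mul_comm n 2))).prod_comp, Fintype.prod_prod_type]
  refine Finset.prod_congr rfl fun j _ => ?_
  rw [Fin.prod_univ_two]
  congr 2 <;> simp [finProdFinEquiv, Nat.mul_comm, Nat.add_comm]

section Dirac

variable {γ : ℝ} {q : ℝ → ℂ}

noncomputable def diracWeight (q : ℝ → ℂ) (n : ℕ) (t : Fin (2 * n) → ℝ) : ℂ :=
  ∏ j : Fin n, q (t ⟨2 * j, by omega⟩) * conj (q (t ⟨2 * j + 1, by omega⟩))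

noncomputable def diracPhase (n : ℕ) (t : Fin (2 * n) → ℝ) : ℝ :=
  ∑ j : Fin n, (t ⟨2 * j + 1, by omega⟩ - t ⟨2 * j, by omega⟩)

theorem aCoeff_eq_integral (γ : ℝ) (q : ℝ → ℂ) (n : ℕ) :
    aCoeff γ q n = fun l => ∫ t in {t | StrictMono t ∧ ∀ i, t i ∈ Set.Ioo 0 γ},
      diracWeight q n t * cexp (2 * I * l * diracPhase n t) := by
  ext l
  refine integral_congr_ae (.of_forall fun t => ?_)
  simp only [Finset.prod_mul_distrib, diracWeight, diracPhase, ← Complex.exp_sum, ← Finset.mul_sum,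
    ofReal_sum, ofReal_sub]

theorem diracWeight_eq_prod (q : ℝ → ℂ) (n : ℕ) (t : Fin (2 * n) → ℝ) :
    diracWeight q n t = ∏ i : Fin (2 * n), (if Even (i : ℕ) then q else conj ∘ q) (t i) := by
  rw [Fin.prod_univ_two_mul]
  simp [diracWeight]

theorem integrable_diracWeight (hq : Integrable q) (n : ℕ) : Integrable (diracWeight q n) := by
  rw [show diracWeight q n = _ from funext (diracWeight_eq_prod q n)]
  refine Integrable.fintype_prod fun i => ?_
  split_ifs
  · exact hq
  · exact Complex.conjCLE.toContinuousLinearMap.integrable_comp hq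

theorem norm_diracWeight (q : ℝ → ℂ) (n : ℕ) (t : Fin (2 * n) → ℝ) :
    ‖diracWeight q n t‖ = ∏ i, ‖q (t i)‖ := by
  rw [diracWeight_eq_prod, norm_prod]
  refine Finset.prod_congr rfl fun i _ => ?_
  split_ifs <;> simp

theorem continuous_diracPhase (n : ℕ) : Continuous (diracPhase n) := by
  unfold diracPhase
  fun_prop

theorem abs_diracPhase_le {n : ℕ} {t : Fin (2 * n) → ℝ} (hmono : StrictMono t)
    (hbox : ∀ i, t i ∈ Set.Ioo 0 γ) : |diracPhase n t| ≤ n * |γ| := by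
  have hterm : ∀ j : Fin n, 0 ≤ t ⟨2 * j + 1, by omega⟩ - t ⟨2 * j, by omega⟩ ∧
      t ⟨2 * j + 1, by omega⟩ - t ⟨2 * j, by omega⟩ ≤ |γ| := fun j =>
    ⟨sub_nonneg.2 (hmono.monotone (Fin.mk_le_mk.2 (by omega))),
      by linarith [(hbox ⟨2 * j + 1, by omega⟩).2, (hbox ⟨2 * j, by omega⟩).1, le_abs_self γ]⟩
  have hnonneg : 0 ≤ diracPhase n t := Finset.sum_nonneg fun j _ => (hterm j).1
  rw [abs_of_nonneg hnonneg]
  calc diracPhase n t ≤ ∑ _j : Fin n, |γ| := Finset.sum_le_sum fun j _ => (hterm j).2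
    _ = n * |γ| := by simp

theorem ae_abs_diracPhase_le (γ : ℝ) (n : ℕ) :
    ∀ᵐ t ∂volume.restrict {t | StrictMono t ∧ ∀ i, t i ∈ Set.Ioo 0 γ},
      |diracPhase n t| ≤ n * |γ| :=
  (ae_restrict_mem (measurableSet_simplex γ)).mono fun _ ht => abs_diracPhase_le ht.1 ht.2

theorem norm_aCoeff_le (hq : Integrable q) (n : ℕ) {l : ℂ} {R : ℝ} (hl : ‖l‖ ≤ R) :
    ‖aCoeff γ q n l‖ ≤ (Real.exp (2 * R * |γ|) * (∫ x, ‖q x‖) ^ 2) ^ n / (2 * n)! := by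
  have hweight : ∫ t in {t | StrictMono t ∧ ∀ i, t i ∈ Set.Ioo 0 γ}, ‖diracWeight q n t‖ ≤
      (∫ x, ‖q x‖) ^ (2 * n) / (2 * n)! := by
    simp only [norm_diracWeight]
    refine (setIntegral_mono_set (Integrable.fintype_prod fun _ => hq.norm).integrableOn
      (.of_forall fun t => Finset.prod_nonneg fun i _ => norm_nonneg _)
      (.of_forall fun t ht => ht.1)).trans ?_
    exact setIntegral_strictMono_prod_le hq.norm fun x => norm_nonneg _
  have hexp : Real.exp (‖2 * I‖ * ‖l‖ * (n * |γ|)) ≤ Real.exp (2 * R * |γ|) ^ n := by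
    rw [← Real.exp_nat_mul, Real.exp_le_exp]
    simp only [norm_mul, Complex.norm_ofNat, Complex.norm_I, mul_one]
    have := mul_le_mul_of_nonneg_right hl (by positivity : (0 : ℝ) ≤ n * |γ|)
    linarith
  rw [aCoeff_eq_integral, mul_pow, ← pow_mul, mul_div_assoc]
  exact (norm_integral_mul_cexp_le (integrable_diracWeight hq n).integrableOn
    (ae_abs_diracPhase_le γ n) _ l).trans (mul_le_mul hexp hweight (integral_nonneg fun _ =>
      norm_nonneg _) (by positivity))

theorem differentiable_aCoeff (hq : Integrable q) (n : ℕ) : Differentiable ℂ (aCoeff γ q n) := by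
  rw [aCoeff_eq_integral]
  exact differentiable_integral_mul_cexp (integrable_diracWeight hq n).integrableOn
    (continuous_diracPhase n).aemeasurable (ae_abs_diracPhase_le γ n) _

end Dirac

theorem summable_pow_div_factorial_two_mul {A : ℝ} (hA : 0 ≤ A) :
    Summable fun n : ℕ => A ^ n / (2 * n)! :=
  (Real.summable_pow_div_factorial A).of_nonneg_of_le (fun n => by positivity) fun n =>
    div_le_div_of_nonneg_left (by positivity) (by positivity)
      (by exact_mod_cast Nat.factorial_le (by omega))

theorem diracA_entire_general (γ : ℝ) (q : ℝ → ℂ) (hq : Integrable q) :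
    (∀ C : Set ℂ, Bornology.IsBounded C →
      TendstoUniformlyOn
        (fun N l => 1 + ∑ n ∈ Finset.range N, aCoeff γ q (n + 1) l)
        (diracA γ q) atTop C) ∧
    Differentiable ℂ (diracA γ q) := by
  have hunif : ∀ C : Set ℂ, Bornology.IsBounded C → TendstoUniformlyOn
      (fun N l => 1 + ∑ n ∈ Finset.range N, aCoeff γ q (n + 1) l) (diracA γ q) atTop C := by
    intro C hC
    obtain ⟨R, hR⟩ := hC.subset_closedBall 0
    have hsum := (summable_nat_add_iff 1).2 <| summable_pow_div_factorial_two_mul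
      (by positivity : 0 ≤ Real.exp (2 * R * |γ|) * (∫ x, ‖q x‖) ^ 2)
    exact (tendsto_const_nhds.tendstoUniformlyOn_const C).fun_add <|
      tendstoUniformlyOn_tsum_nat hsum fun n l hl => norm_aCoeff_le hq (n + 1) (by
        simpa using hR hl)
  refine ⟨hunif, ?_⟩
  have hloc : TendstoLocallyUniformlyOn
      (fun N l => 1 + ∑ n ∈ Finset.range N, aCoeff γ q (n + 1) l) (diracA γ q) atTop Set.univ :=
    (tendstoLocallyUniformlyOn_iff_forall_isCompact isOpen_univ).2 fun K _ hK =>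
      hunif K hK.isBounded
  have hpartial : ∀ N, DifferentiableOn ℂ
      (fun l => 1 + ∑ n ∈ Finset.range N, aCoeff γ q (n + 1) l) Set.univ := fun N =>
    ((differentiable_const 1).add
      (Differentiable.fun_sum fun n _ => differentiable_aCoeff hq (n + 1))).differentiableOn
  exact differentiableOn_univ.1 (hloc.differentiableOn (.of_forall hpartial) isOpen_univ)

/-- The series `a(λ) = 1 + Σ_{n≥1} a_n(λ)` converges uniformly on bounded subsets of `ℂ`
and defines an entire function. -/
theorem diracA_entire (γ : ℝ) (hγ : 0 < γ) (q : ℝ → ℂ)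
    (hq : Integrable q) (hsupp : Function.support q ⊆ Set.Icc 0 γ) :
    (∀ C : Set ℂ, Bornology.IsBounded C →
      TendstoUniformlyOn
        (fun N l => 1 + ∑ n ∈ Finset.range N, aCoeff γ q (n + 1) l)
        (diracA γ q) atTop C) ∧
    Differentiable ℂ (diracA γ q) :=
  diracA_entire_general γ q hq
end

section
/- Let γ > 0 and let q ∈ L¹(ℝ;ℂ) with supp q ⊆ [0,γ]. Define the iterates χ₀(x,λ) = 1 and χ_n(x,λ) = ∫_x^γ q(t₁) (∫_{t₁}^γ exp(2iλ(t₂ − t₁))·conj(q(t₂))·χ_{n−1}(t₂,λ) dt₂) dt₁ for n ≥ 1. Then for every λ ∈ ℂ the series χ(x,λ) = 1 + Σ_{n≥1} χ_n(x,λ) converges for all x ∈ ℝ, and the resulting function χ satisfies the integral equation χ(x,λ) = 1 + ∫_x^γ q(t₁) (∫_{t₁}^γ exp(2iλ(t₂ − t₁))·conj(q(t₂))·χ(t₂,λ) dt₂) dt₁ for all x ∈ ℝ. -/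
/-!
Put `F(x) = ∫_x^γ |q|`. Since `F` is absolutely continuous with `F' = -|q|`, one has
`∫_x^γ |q(t)| F(t)^k dt = F(x)^(k+1)/(k+1)`, so each of the two nested integrals in the recursion
raises the power of `F` by one, and induction gives
`|χ_n(x)| ≤ e^(2|λ|γn) F(x)^(2n)/(2n)! ≤ (e^(2|λ|γ) ‖q‖₁²)^n/n!`, uniformly in `x`.
Hence the series converges, and dominated convergence lets it be summed under both integrals of
the recursion defining `χ_(n+1)` from `χ_n`, which turns the recursion into the integral equation.
-/
open MeasureTheory Complex Real

/-- The iterates `χ_n`: `χ₀(x,λ) = 1` and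
`χ_n(x,λ) = ∫_x^γ q(t₁) (∫_{t₁}^γ exp(2iλ(t₂−t₁))·conj(q(t₂))·χ_{n−1}(t₂,λ) dt₂) dt₁`. -/
noncomputable def chi (γ : ℝ) (q : ℝ → ℂ) : ℕ → ℝ → ℂ → ℂ
  | 0 => fun _ _ => 1
  | n + 1 => fun x l =>
      ∫ t₁ in x..γ, q t₁ *
        ∫ t₂ in t₁..γ,
          Complex.exp (2 * Complex.I * l * ((t₂ : ℝ) - t₁)) * (starRingEnd ℂ) (q t₂) *
            chi γ q n t₂ l

open Set

theorem AbsolutelyContinuousOnInterval.pow {f : ℝ → ℝ} {a b : ℝ}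
    (hf : AbsolutelyContinuousOnInterval f a b) (k : ℕ) :
    AbsolutelyContinuousOnInterval (fun x => f x ^ k) a b := by
  induction k with
  | zero => simpa using (contDiffOn_const (c := (1 : ℝ))).absolutelyContinuousOnInterval
  | succ k ih => simpa only [pow_succ] using ih.fun_mul hf

theorem integral_mul_intervalIntegral_pow {w : ℝ → ℝ} (hw : Integrable w) (a b : ℝ) (k : ℕ) :
    ∫ t in a..b, w t * (∫ s in t..b, w s) ^ k = (∫ s in a..b, w s) ^ (k + 1) / (k + 1) := by
  set F : ℝ → ℝ := fun x => ∫ s in x..b, w s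
  have hF : F = fun x => -∫ s in b..x, w s := by
    funext x; exact intervalIntegral.integral_symm _ _
  have hac : AbsolutelyContinuousOnInterval (fun x => F x ^ (k + 1)) a b := by
    refine AbsolutelyContinuousOnInterval.pow ?_ _
    rw [hF]
    exact (hw.intervalIntegrable.absolutelyContinuousOnInterval_intervalIntegral
      right_mem_uIcc).neg
  have hderiv : ∀ᵐ t, deriv (fun x => F x ^ (k + 1)) t = -((k + 1) * (w t * F t ^ k)) := by
    filter_upwards [_root_.LocallyIntegrable.ae_hasDerivAt_integral hw.locallyIntegrable]
      with t ht
    have hFt : HasDerivAt F (-w t) t := by rw [hF]; exact (ht b).neg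
    rw [(hFt.fun_pow (k + 1)).deriv]
    push_cast; ring
  have hFTC := hac.integral_deriv_eq_sub
  rw [intervalIntegral.integral_congr_ae (hderiv.mono fun t ht _ => ht),
    intervalIntegral.integral_neg, intervalIntegral.integral_const_mul] at hFTC
  simp only [F, intervalIntegral.integral_same, ne_eq, Nat.add_one_ne_zero, not_false_eq_true,
    zero_pow, zero_sub, neg_inj] at hFTC
  rw [← hFTC]
  field_simp

theorem continuous_intervalIntegral_lower {E : Type*} [NormedAddCommGroup E] [NormedSpace ℝ E]
    {f : ℝ → E} (hf : ∀ a b, IntervalIntegrable f volume a b) (b : ℝ) :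
    Continuous fun a => ∫ t in a..b, f t :=
  (intervalIntegral.continuous_primitive hf b).neg.congr fun _ =>
    (intervalIntegral.integral_symm _ _).symm

theorem norm_intervalIntegral_le_of_norm_le_mul_pow {E : Type*} [NormedAddCommGroup E]
    [NormedSpace ℝ E] {f : ℝ → E} {w : ℝ → ℝ} (hw : Integrable w) {a b C : ℝ} (hab : a ≤ b)
    {k : ℕ} (h : ∀ t ∈ Ioc a b, ‖f t‖ ≤ C * (w t * (∫ s in t..b, w s) ^ k)) :
    ‖∫ t in a..b, f t‖ ≤ C * ((∫ s in a..b, w s) ^ (k + 1) / (k + 1)) := by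
  have hcont : Continuous fun t => (∫ s in t..b, w s) ^ k :=
    (continuous_intervalIntegral_lower (fun _ _ => hw.intervalIntegrable) b).pow k
  calc ‖∫ t in a..b, f t‖
      ≤ ∫ t in a..b, C * (w t * (∫ s in t..b, w s) ^ k) :=
        intervalIntegral.norm_integral_le_of_norm_le hab (ae_of_all _ h)
          ((hw.intervalIntegrable.mul_continuousOn hcont.continuousOn).const_mul C)
    _ = C * ((∫ s in a..b, w s) ^ (k + 1) / (k + 1)) := by
        rw [intervalIntegral.integral_const_mul, integral_mul_intervalIntegral_pow hw]

theorem intervalIntegral_norm_le_integral_norm {E : Type*} [NormedAddCommGroup E] {f : ℝ → E}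
    (hf : Integrable f) {a b : ℝ} (hab : a ≤ b) : ∫ t in a..b, ‖f t‖ ≤ ∫ t, ‖f t‖ := by
  rw [intervalIntegral.integral_of_le hab]
  exact setIntegral_le_integral hf.norm (ae_of_all _ fun _ => norm_nonneg _)

theorem integrable_conj {α : Type*} [MeasurableSpace α] {μ : Measure α} {f : α → ℂ}
    (hf : Integrable f μ) : Integrable (fun a => (starRingEnd ℂ) (f a)) μ :=
  (integrable_norm_iff (Complex.continuous_conj.comp_aestronglyMeasurable hf.1)).mp
    (by simpa using hf.norm)

namespace Chi

variable {γ : ℝ} {q : ℝ → ℂ} {l : ℂ}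

noncomputable def innerIntegral (γ : ℝ) (q : ℝ → ℂ) (l : ℂ) (φ : ℝ → ℂ) (t₁ : ℝ) : ℂ :=
  ∫ t₂ in t₁..γ,
    Complex.exp (2 * Complex.I * l * ((t₂ : ℝ) - t₁)) * (starRingEnd ℂ) (q t₂) * φ t₂

noncomputable def volterra (γ : ℝ) (q : ℝ → ℂ) (l : ℂ) (φ : ℝ → ℂ) (x : ℝ) : ℂ :=
  ∫ t₁ in x..γ, q t₁ * innerIntegral γ q l φ t₁

theorem chi_succ (n : ℕ) (x : ℝ) :
    chi γ q (n + 1) x l = volterra γ q l (fun t => chi γ q n t l) x := rfl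

theorem norm_exp_le {t₁ t₂ : ℝ} (ht₁ : 0 ≤ t₁) (ht₂ : t₂ ∈ Ioc t₁ γ) :
    ‖Complex.exp (2 * Complex.I * l * ((t₂ : ℝ) - t₁))‖ ≤ Real.exp (2 * ‖l‖ * γ) := by
  rw [Complex.norm_exp]
  refine Real.exp_le_exp.2 ((Complex.re_le_norm _).trans ?_)
  have hnorm : ‖(t₂ : ℂ) - t₁‖ = t₂ - t₁ := by
    rw [← Complex.ofReal_sub, Complex.norm_real, Real.norm_of_nonneg (by linarith [ht₂.1])]
  rw [norm_mul, norm_mul, norm_mul, Complex.norm_I, Complex.norm_two, hnorm]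
  have := norm_nonneg l
  nlinarith [ht₂.2]

theorem intervalIntegrable_mul_conj_mul (hq : Integrable q) {g φ : ℝ → ℂ} (hg : Continuous g)
    (hφ : Continuous φ) (a b : ℝ) :
    IntervalIntegrable (fun t => g t * (starRingEnd ℂ) (q t) * φ t) volume a b :=
  ((integrable_conj hq).intervalIntegrable.continuousOn_mul hg.continuousOn).mul_continuousOn
    hφ.continuousOn

theorem innerIntegral_eq (φ : ℝ → ℂ) (t₁ : ℝ) :
    innerIntegral γ q l φ t₁ = Complex.exp (-(2 * Complex.I * l * t₁)) *
      ∫ t₂ in t₁..γ, Complex.exp (2 * Complex.I * l * t₂) * (starRingEnd ℂ) (q t₂) * φ t₂ := by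
  rw [innerIntegral, ← intervalIntegral.integral_const_mul]
  refine intervalIntegral.integral_congr fun t₂ _ => ?_
  rw [mul_sub, sub_eq_neg_add, Complex.exp_add]
  ring

theorem continuous_innerIntegral (hq : Integrable q) {φ : ℝ → ℂ} (hφ : Continuous φ) :
    Continuous (innerIntegral γ q l φ) := by
  simp_rw [funext (innerIntegral_eq (γ := γ) (q := q) (l := l) φ)]
  exact (by fun_prop : Continuous fun t₁ : ℝ => Complex.exp (-(2 * Complex.I * l * t₁))).mul
    (continuous_intervalIntegral_lower
      (intervalIntegrable_mul_conj_mul hq (by fun_prop) hφ) γ)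

theorem continuous_volterra (hq : Integrable q) {φ : ℝ → ℂ} (hφ : Continuous φ) :
    Continuous (volterra γ q l φ) :=
  continuous_intervalIntegral_lower (fun _ _ =>
    hq.intervalIntegrable.mul_continuousOn (continuous_innerIntegral hq hφ).continuousOn) γ

theorem continuous_chi (hq : Integrable q) (n : ℕ) : Continuous fun x => chi γ q n x l := by
  induction n with
  | zero => exact continuous_const
  | succ n ih => exact continuous_volterra hq ih

theorem norm_innerIntegral_le (hq : Integrable q) {φ : ℝ → ℂ} {C : ℝ} {k : ℕ} {t₁ : ℝ}
    (ht₁ : t₁ ∈ Icc 0 γ) (hφ : ∀ t ∈ Ioc t₁ γ, ‖φ t‖ ≤ C * (∫ s in t..γ, ‖q s‖) ^ k) :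
    ‖innerIntegral γ q l φ t₁‖ ≤
      Real.exp (2 * ‖l‖ * γ) * C * ((∫ s in t₁..γ, ‖q s‖) ^ (k + 1) / (k + 1)) := by
  refine norm_intervalIntegral_le_of_norm_le_mul_pow hq.norm ht₁.2 fun t ht => ?_
  rw [norm_mul, norm_mul, RCLike.norm_conj]
  calc _ ≤ Real.exp (2 * ‖l‖ * γ) * ‖q t‖ * (C * (∫ s in t..γ, ‖q s‖) ^ k) :=
        mul_le_mul (mul_le_mul_of_nonneg_right (norm_exp_le ht₁.1 ht) (norm_nonneg _)) (hφ t ht)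
          (norm_nonneg _) (by positivity)
    _ = _ := by ring

theorem norm_volterra_le (hq : Integrable q) (hsupp : Function.support q ⊆ Icc 0 γ)
    {φ : ℝ → ℂ} {C : ℝ} {k : ℕ} {x : ℝ} (hx : x ≤ γ)
    (hφ : ∀ t ∈ Ioc x γ, ‖φ t‖ ≤ C * (∫ s in t..γ, ‖q s‖) ^ k) :
    ‖volterra γ q l φ x‖ ≤ Real.exp (2 * ‖l‖ * γ) * C / ((k + 1) * (k + 2)) *
      (∫ s in x..γ, ‖q s‖) ^ (k + 2) := by
  refine (norm_intervalIntegral_le_of_norm_le_mul_pow (C := Real.exp (2 * ‖l‖ * γ) * C / (k + 1))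
    (k := k + 1) hq.norm hx fun t₁ ht₁ => ?_).trans_eq ?_
  · rw [norm_mul]
    by_cases hqt : q t₁ = 0
    · simp [hqt]
    have hin := norm_innerIntegral_le (l := l) hq (hsupp hqt) fun t ht =>
      hφ t ⟨ht₁.1.trans ht.1, ht.2⟩
    calc ‖q t₁‖ * ‖innerIntegral γ q l φ t₁‖
        ≤ ‖q t₁‖ * (Real.exp (2 * ‖l‖ * γ) * C * ((∫ s in t₁..γ, ‖q s‖) ^ (k + 1) / (k + 1))) :=
          mul_le_mul_of_nonneg_left hin (norm_nonneg _)
      _ = _ := by ring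
  · push_cast
    field_simp
    ring

theorem norm_chi_le (hq : Integrable q) (hsupp : Function.support q ⊆ Icc 0 γ) (n : ℕ) {x : ℝ}
    (hx : x ≤ γ) :
    ‖chi γ q n x l‖ ≤
      Real.exp (2 * ‖l‖ * γ) ^ n / (2 * n).factorial * (∫ s in x..γ, ‖q s‖) ^ (2 * n) := by
  induction n generalizing x with
  | zero => simp [chi]
  | succ n ih =>
    rw [chi_succ]
    refine (norm_volterra_le hq hsupp hx fun t ht => ih ht.2).trans (le_of_eq ?_)
    rw [show 2 * (n + 1) = 2 * n + 1 + 1 by ring, Nat.factorial_succ, Nat.factorial_succ]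
    push_cast
    field_simp
    ring

theorem volterra_of_le (hsupp : Function.support q ⊆ Icc 0 γ) (φ : ℝ → ℂ) {x : ℝ}
    (hx : γ ≤ x) : volterra γ q l φ x = 0 := by
  refine intervalIntegral.integral_zero_ae (ae_of_all _ fun t ht => ?_)
  rw [uIoc_of_ge hx] at ht
  have hqt : q t = 0 := Function.notMem_support.mp fun h => (hsupp h).2.not_gt ht.1
  rw [hqt, zero_mul]

theorem norm_chi_le_pow_div_factorial (hq : Integrable q) (hsupp : Function.support q ⊆ Icc 0 γ)
    (n : ℕ) (x : ℝ) :
    ‖chi γ q n x l‖ ≤ (Real.exp (2 * ‖l‖ * γ) * (∫ s, ‖q s‖) ^ 2) ^ n / n.factorial := by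
  rcases le_or_gt x γ with hx | hx
  · have hF0 : 0 ≤ ∫ s in x..γ, ‖q s‖ :=
      intervalIntegral.integral_nonneg hx fun _ _ => norm_nonneg _
    have hFQ := intervalIntegral_norm_le_integral_norm hq hx
    refine (norm_chi_le hq hsupp n hx).trans ?_
    rw [mul_pow, ← pow_mul, mul_div_right_comm]
    gcongr
    omega
  · cases n with
    | zero => simp [chi]
    | succ n =>
      rw [chi_succ, volterra_of_le hsupp _ hx.le, norm_zero]
      positivity

theorem summable_chi (hq : Integrable q) (hsupp : Function.support q ⊆ Icc 0 γ) (x : ℝ) :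
    Summable fun n => chi γ q n x l :=
  .of_norm_bounded (Real.summable_pow_div_factorial _)
    (norm_chi_le_pow_div_factorial hq hsupp · x)

section HasSum

variable {φ : ℕ → ℝ → ℂ} {Φ : ℝ → ℂ} {b : ℕ → ℝ}

theorem hasSum_innerIntegral (hq : Integrable q) (hφ : ∀ n, Continuous (φ n))
    (hb : Summable b) (hφb : ∀ n t, ‖φ n t‖ ≤ b n) (hΦ : ∀ t, HasSum (φ · t) (Φ t)) {t₁ : ℝ}
    (ht₁ : t₁ ∈ Icc 0 γ) :
    HasSum (fun n => innerIntegral γ q l (φ n) t₁) (innerIntegral γ q l Φ t₁) := by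
  refine intervalIntegral.hasSum_integral_of_dominated_convergence
    (fun n t => Real.exp (2 * ‖l‖ * γ) * b n * ‖q t‖)
    (fun n => (intervalIntegrable_mul_conj_mul hq (by fun_prop) (hφ n) t₁ γ).def'.1)
    (fun n => ae_of_all _ fun t ht => ?_) (ae_of_all _ fun t _ => (hb.mul_left _).mul_right _)
    ?_ (ae_of_all _ fun t _ => (hΦ t).mul_left _)
  · rw [uIoc_of_le ht₁.2] at ht
    rw [norm_mul, norm_mul, RCLike.norm_conj]
    calc _ ≤ Real.exp (2 * ‖l‖ * γ) * ‖q t‖ * b n :=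
          mul_le_mul (mul_le_mul_of_nonneg_right (norm_exp_le ht₁.1 ht) (norm_nonneg _))
            (hφb n t) (norm_nonneg _) (by positivity)
      _ = _ := by ring
  · simp_rw [tsum_mul_right, tsum_mul_left]
    exact (hq.norm.const_mul _).intervalIntegrable

theorem hasSum_volterra (hq : Integrable q) (hsupp : Function.support q ⊆ Icc 0 γ)
    (hφ : ∀ n, Continuous (φ n)) (hb : Summable b) (hφb : ∀ n t, ‖φ n t‖ ≤ b n)
    (hΦ : ∀ t, HasSum (φ · t) (Φ t)) (x : ℝ) :
    HasSum (fun n => volterra γ q l (φ n) x) (volterra γ q l Φ x) := by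
  refine intervalIntegral.hasSum_integral_of_dominated_convergence
    (fun n t => Real.exp (2 * ‖l‖ * γ) * b n * (∫ s, ‖q s‖) * ‖q t‖)
    (fun n => (hq.intervalIntegrable.mul_continuousOn
      (continuous_innerIntegral hq (hφ n)).continuousOn).def'.1)
    (fun n => ae_of_all _ fun t _ => ?_) (ae_of_all _ fun t _ => ?_) ?_
    (ae_of_all _ fun t _ => ?_)
  · rw [norm_mul, mul_comm]
    by_cases hqt : q t = 0
    · simp [hqt]
    have hin := norm_innerIntegral_le (l := l) (k := 0) hq (hsupp hqt) fun s _ => by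
      simpa using hφb n s
    have hb0 : 0 ≤ b n := (norm_nonneg _).trans (hφb n 0)
    simp only [zero_add, pow_one, Nat.cast_zero, div_one] at hin
    gcongr
    exact hin.trans (by gcongr; exact intervalIntegral_norm_le_integral_norm hq (hsupp hqt).2)
  · exact ((hb.mul_left _).mul_right _).mul_right _
  · simp_rw [tsum_mul_right, tsum_mul_left]
    exact (hq.norm.const_mul _).intervalIntegrable
  · by_cases hqt : q t = 0
    · simp [hqt]
    exact (hasSum_innerIntegral hq hφ hb hφb hΦ (hsupp hqt)).mul_left (q t)

end HasSum

end Chi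

open Chi in
theorem chi_series_integral_equation_general (γ : ℝ) (q : ℝ → ℂ)
    (hq : Integrable q) (hsupp : Function.support q ⊆ Set.Icc 0 γ) (l : ℂ) :
    (∀ x : ℝ, Summable fun n : ℕ => chi γ q (n + 1) x l) ∧
    (∀ x : ℝ,
      (1 + ∑' n : ℕ, chi γ q (n + 1) x l) =
        1 + ∫ t₁ in x..γ, q t₁ *
          ∫ t₂ in t₁..γ,
            Complex.exp (2 * Complex.I * l * ((t₂ : ℝ) - t₁)) * (starRingEnd ℂ) (q t₂) *
              (1 + ∑' n : ℕ, chi γ q (n + 1) t₂ l)) := by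
  have hsum (x : ℝ) : Summable fun n => chi γ q n x l := summable_chi hq hsupp x
  have hS (x : ℝ) : 1 + ∑' n, chi γ q (n + 1) x l = ∑' n, chi γ q n x l :=
    (hsum x).tsum_eq_zero_add.symm
  refine ⟨fun x => (summable_nat_add_iff 1).mpr (hsum x), fun x => ?_⟩
  simp only [hS]
  have hvolterra := hasSum_volterra (l := l) hq hsupp (continuous_chi hq)
    (Real.summable_pow_div_factorial _) (norm_chi_le_pow_div_factorial hq hsupp)
    (fun t => (hsum t).hasSum) x
  exact (HasSum.zero_add (f := fun n => chi γ q n x l) hvolterra).tsum_eq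

/-- The series `χ(x,λ) = 1 + Σ_{n≥1} χ_n(x,λ)` converges for all `x ∈ ℝ`, and the sum
satisfies the integral equation
`χ(x,λ) = 1 + ∫_x^γ q(t₁) ∫_{t₁}^γ exp(2iλ(t₂−t₁))·conj(q(t₂))·χ(t₂,λ) dt₂ dt₁`. -/
theorem chi_series_integral_equation (γ : ℝ) (hγ : 0 < γ) (q : ℝ → ℂ)
    (hq : Integrable q) (hsupp : Function.support q ⊆ Set.Icc 0 γ) (l : ℂ) :
    (∀ x : ℝ, Summable fun n : ℕ => chi γ q (n + 1) x l) ∧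
    (∀ x : ℝ,
      (1 + ∑' n : ℕ, chi γ q (n + 1) x l) =
        1 + ∫ t₁ in x..γ, q t₁ *
          ∫ t₂ in t₁..γ,
            Complex.exp (2 * Complex.I * l * ((t₂ : ℝ) - t₁)) * (starRingEnd ℂ) (q t₂) *
              (1 + ∑' n : ℕ, chi γ q (n + 1) t₂ l)) :=
  chi_series_integral_equation_general γ q hq hsupp l
end
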